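/- arXiv:1810.09020 — 2 statements merged into one kernel-verified Lean document; each statement's English description precedes it below -/
import Mathlib

section
/- Let γ be a parabolic isometry of ℍⁿ fixing the ideal point ∞ and γ̄ a hyperbolic isometry fixing ∞ and another ideal point. If b ≠ 0 (γ is not the identity on the horosphere through (0,1) up to rotation about 0), then the subgroup ⟨γ, γ̄⟩ of Isom⁺(ℍⁿ) is not discrete. -/
/-!
Conjugating `γ` by `γ̄ᵏ` keeps the height and scales the horizontal displacement:
`γ̄ᵏ γ γ̄⁻ᵏ` sends `(0, 1)` to `(λᵏ Bᵏ b, 1)`. When `λ < 1` (otherwise replace `γ̄` by `γ̄⁻¹`)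
these points are distinct from `(0, 1)`, because `Bᵏ` is orthogonal and `b ≠ 0`, and they
converge to `(0, 1)`, because `‖Bᵏ b‖` stays bounded.
-/

open Matrix Filter Topology

namespace Matrix

variable {𝕜 ι : Type*} [RCLike 𝕜] [Fintype ι] [DecidableEq ι]

theorem norm_mulVec_le_of_mem_unitaryGroup {U : Matrix ι ι 𝕜} (hU : U ∈ unitaryGroup ι 𝕜)
    (v : ι → 𝕜) : ‖U *ᵥ v‖ ≤ ∑ j, ‖v j‖ := by
  refine (pi_norm_le_iff_of_nonneg (by positivity)).mpr fun i => ?_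
  calc ‖∑ j, U i j * v j‖ ≤ ∑ j, ‖U i j‖ * ‖v j‖ := norm_sum_le_of_le _ fun j _ => norm_mul_le _ _
    _ ≤ ∑ j, ‖v j‖ := Finset.sum_le_sum fun j _ =>
        mul_le_of_le_one_left (norm_nonneg _) (entry_norm_bound_of_unitary hU i j)

theorem mulVec_ne_zero_of_mem_unitaryGroup {U : Matrix ι ι 𝕜} (hU : U ∈ unitaryGroup ι 𝕜)
    {v : ι → 𝕜} (hv : v ≠ 0) : U *ᵥ v ≠ 0 := by
  intro h
  apply hv
  simpa [mulVec_mulVec, Unitary.star_mul_self_of_mem hU] using congrArg (star U *ᵥ ·) h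

end Matrix

variable {ι : Type*} [Fintype ι]

theorem conj_apply_of_similarity {γ δ : Equiv.Perm ((ι → ℝ) × ℝ)} {A C : Matrix ι ι ℝ}
    {b : ι → ℝ} {μ : ℝ} (hγ : ∀ p, γ p = (A *ᵥ p.1 + b, p.2))
    (hδ : ∀ p, δ p = (μ • (C *ᵥ p.1), μ * p.2)) (hμ : μ ≠ 0) :
    (δ * γ * δ⁻¹) (0, 1) = (μ • (C *ᵥ b), 1) := by
  have hδ_inv : δ⁻¹ (0, 1) = (0, μ⁻¹) := by
    rw [Equiv.Perm.inv_def, Equiv.symm_apply_eq, hδ]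
    simp [hμ]
  rw [Equiv.Perm.mul_apply, Equiv.Perm.mul_apply, hδ_inv, hγ, hδ]
  simp [hμ]

variable [DecidableEq ι]

section Similarity

variable {δ : Equiv.Perm ((ι → ℝ) × ℝ)} {μ : ℝ} {C : Matrix ι ι ℝ}

theorem pow_apply_of_similarity (hδ : ∀ p, δ p = (μ • (C *ᵥ p.1), μ * p.2)) (k : ℕ)
    (p : (ι → ℝ) × ℝ) : (δ ^ k) p = (μ ^ k • (C ^ k *ᵥ p.1), μ ^ k * p.2) := by
  induction k with
  | zero => simp
  | succ k ih =>
    rw [pow_succ', Equiv.Perm.mul_apply, ih, hδ]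
    simp [mulVec_smul, mulVec_mulVec, smul_smul, pow_succ', mul_assoc]

theorem inv_apply_of_similarity (hδ : ∀ p, δ p = (μ • (C *ᵥ p.1), μ * p.2))
    (hC : C ∈ unitaryGroup ι ℝ) (hμ : μ ≠ 0) (p : (ι → ℝ) × ℝ) :
    δ⁻¹ p = (μ⁻¹ • (star C *ᵥ p.1), μ⁻¹ * p.2) := by
  rw [Equiv.Perm.inv_def, Equiv.symm_apply_eq, hδ]
  simp [mulVec_smul, mulVec_mulVec, Unitary.mul_star_self_of_mem hC, smul_smul, hμ]

end Similarity

theorem tendsto_pow_smul_mulVec_pow {C : Matrix ι ι ℝ} (hC : C ∈ unitaryGroup ι ℝ) {μ : ℝ}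
    (hμ : |μ| < 1) (b : ι → ℝ) : Tendsto (fun k : ℕ => μ ^ k • (C ^ k *ᵥ b)) atTop (𝓝 0) :=
  (tendsto_pow_atTop_nhds_zero_of_abs_lt_one hμ).zero_smul_isBoundedUnder_le
    ⟨_, eventually_map.mpr <| Eventually.of_forall fun k =>
      norm_mulVec_le_of_mem_unitaryGroup (pow_mem hC k) b⟩

theorem accPt_orbit_of_contracting_similarity {H : Subgroup (Equiv.Perm ((ι → ℝ) × ℝ))}
    {γ δ : Equiv.Perm ((ι → ℝ) × ℝ)} (hγH : γ ∈ H) (hδH : δ ∈ H) {A C : Matrix ι ι ℝ}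
    {b : ι → ℝ} {μ : ℝ} (hγ : ∀ p, γ p = (A *ᵥ p.1 + b, p.2))
    (hδ : ∀ p, δ p = (μ • (C *ᵥ p.1), μ * p.2)) (hC : C ∈ unitaryGroup ι ℝ) (hμ₀ : μ ≠ 0)
    (hμ₁ : |μ| < 1) (hb : b ≠ 0) :
    AccPt ((0, 1) : (ι → ℝ) × ℝ) (𝓟 ((fun g : Equiv.Perm ((ι → ℝ) × ℝ) => g (0, 1)) '' H)) := by
  have hconj (k : ℕ) : (δ ^ k * γ * (δ ^ k)⁻¹) (0, 1) = (μ ^ k • (C ^ k *ᵥ b), 1) :=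
    conj_apply_of_similarity hγ (pow_apply_of_similarity hδ k) (pow_ne_zero k hμ₀)
  have hmem (k : ℕ) : (μ ^ k • (C ^ k *ᵥ b), (1 : ℝ)) ∈ (fun g : Equiv.Perm _ => g (0, 1)) '' H :=
    ⟨_, mul_mem (mul_mem (pow_mem hδH k) hγH) (inv_mem (pow_mem hδH k)), hconj k⟩
  have hne (k : ℕ) : (μ ^ k • (C ^ k *ᵥ b), (1 : ℝ)) ≠ (0, 1) := fun h =>
    smul_ne_zero (pow_ne_zero k hμ₀) (mulVec_ne_zero_of_mem_unitaryGroup (pow_mem hC k) hb)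
      (congrArg Prod.fst h)
  have hlim : Tendsto (fun k : ℕ => (μ ^ k • (C ^ k *ᵥ b), (1 : ℝ))) atTop (𝓝 (0, 1)) :=
    (tendsto_pow_smul_mulVec_pow hC hμ₁ b).prodMk_nhds tendsto_const_nhds
  rw [accPt_iff_frequently]
  exact hlim.frequently (Frequently.of_forall fun k => ⟨hne k, hmem k⟩)

theorem subgroup_not_discrete_general (m : ℕ)
    (A B : Matrix (Fin m) (Fin m) ℝ)
    (hB : B ∈ Matrix.specialOrthogonalGroup (Fin m) ℝ)
    (b : Fin m → ℝ) (hb : b ≠ 0)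
    (lam : ℝ) (hlam : 0 < lam) (hlam' : lam ≠ 1)
    (γ γbar : Equiv.Perm ((Fin m → ℝ) × ℝ))
    (hγ : ∀ p, γ p = (A *ᵥ p.1 + b, p.2))
    (hγbar : ∀ p, γbar p = (lam • (B *ᵥ p.1), lam * p.2)) :
    ∃ p c : (Fin m → ℝ) × ℝ, 0 < p.2 ∧ 0 < c.2 ∧
      AccPt c (𝓟 ((fun g : Equiv.Perm ((Fin m → ℝ) × ℝ) => g p) ''
        (Subgroup.closure {γ, γbar} : Subgroup (Equiv.Perm ((Fin m → ℝ) × ℝ))))) := by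
  refine ⟨(0, 1), (0, 1), one_pos, one_pos, ?_⟩
  have hγH : γ ∈ Subgroup.closure {γ, γbar} := Subgroup.subset_closure (by simp)
  have hγbarH : γbar ∈ Subgroup.closure {γ, γbar} := Subgroup.subset_closure (by simp)
  have hBU : B ∈ unitaryGroup (Fin m) ℝ := specialUnitaryGroup_le_unitaryGroup hB
  rcases hlam'.lt_or_gt with hlt | hgt
  · exact accPt_orbit_of_contracting_similarity hγH hγbarH hγ hγbar hBU hlam.ne'
      (by rwa [abs_of_pos hlam]) hb
  · exact accPt_orbit_of_contracting_similarity hγH (inv_mem hγbarH) hγ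
      (inv_apply_of_similarity hγbar hBU hlam.ne') (Unitary.star_mem hBU) (inv_ne_zero hlam.ne')
      (by rwa [abs_of_pos (inv_pos.mpr hlam), inv_lt_one₀ hlam]) hb

/-- Let `γ` be a parabolic isometry of `ℍⁿ` fixing the ideal point `∞`, written in
the upper half-space model as `γ(x,t) = (Ax + b, t)` with `A ∈ SO(n-1)` and
`b ≠ 0`, and let `γ̄` be a hyperbolic isometry fixing `∞` and another ideal point,
written as `γ̄(x,t) = λ(Bx, t)` with `λ > 0`, `λ ≠ 1`, `B ∈ SO(n-1)`.  Then the
subgroup `⟨γ, γ̄⟩` is not discrete: the orbit of some point of the upper half-space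
has an accumulation point in the upper half-space. -/
theorem subgroup_not_discrete (m : ℕ)
    (A B : Matrix (Fin m) (Fin m) ℝ)
    (hA : A ∈ Matrix.specialOrthogonalGroup (Fin m) ℝ)
    (hB : B ∈ Matrix.specialOrthogonalGroup (Fin m) ℝ)
    (b : Fin m → ℝ) (hb : b ≠ 0)
    (lam : ℝ) (hlam : 0 < lam) (hlam' : lam ≠ 1)
    (γ γbar : Equiv.Perm ((Fin m → ℝ) × ℝ))
    (hγ : ∀ p, γ p = (A *ᵥ p.1 + b, p.2))
    (hγbar : ∀ p, γbar p = (lam • (B *ᵥ p.1), lam * p.2)) :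
    ∃ p c : (Fin m → ℝ) × ℝ, 0 < p.2 ∧ 0 < c.2 ∧
      AccPt c (𝓟 ((fun g : Equiv.Perm ((Fin m → ℝ) × ℝ) => g p) ''
        (Subgroup.closure {γ, γbar} : Subgroup (Equiv.Perm ((Fin m → ℝ) × ℝ))))) :=
  subgroup_not_discrete_general m A B hB b hb lam hlam hlam' γ γbar hγ hγbar
end

section
/- A compact oriented Riemannian 4-manifold that is locally conformally flat with identically zero scalar curvature has nonpositive Euler characteristic; combined with χ(Σ_g × Σ_h) = (2−2g)(2−2h) ≥ 0 for g ≥ 2, h ≥ 1, such a metric on Σ_g × Σ_h forces χ = 0 and the metric to be Ricci-flat, hence flat, which is impossible since χ(Σ_g × Σ_h) ≠ 0 when g,h ≥ 2. -/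
open MeasureTheory Real

/-!
With the Weyl curvature and the scalar curvature vanishing, the Chern–Gauss–Bonnet integrand
reduces to `-|Ric₀|²/2`, so `χ = -(1/16π²) ∫ |Ric₀|² ≤ 0`. For `g, h ≥ 1` both factors of
`χ(Σ_g × Σ_h) = (2 - 2g)(2 - 2h)` are nonpositive, so `χ ≥ 0`. Hence `χ = 0`, the metric is
Ricci-flat, and since `2 - 2g ≠ 0` the other factor vanishes, i.e. `h = 1`.
-/

theorem eulerChar_eq_neg_integral_of_scalar_weyl_zero {M : Type*} [MeasurableSpace M]
    (μ : Measure M) (χ : ℝ) (s ric0sq Wpsq Wmsq : M → ℝ)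
    (hCGB : χ = (1 / (8 * π ^ 2)) *
      ∫ x, ((s x) ^ 2 / 24 - ric0sq x / 2 + Wpsq x + Wmsq x) ∂μ)
    (hWp : ∀ x, Wpsq x = 0) (hWm : ∀ x, Wmsq x = 0) (hs : ∀ x, s x = 0) :
    χ = -(1 / (16 * π ^ 2)) * ∫ x, ric0sq x ∂μ := by
  have hintegrand : (fun x => (s x) ^ 2 / 24 - ric0sq x / 2 + Wpsq x + Wmsq x)
      = fun x => -(1 / 2 : ℝ) * ric0sq x := by
    funext x
    rw [hs x, hWp x, hWm x]
    ring
  rw [hCGB, hintegrand, integral_const_mul]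
  ring

theorem eulerChar_prod_surfaces_nonneg {g h : ℕ} (hg : 1 ≤ g) (hh : 1 ≤ h) :
    0 ≤ ((2 : ℤ) - 2 * g) * ((2 : ℤ) - 2 * h) :=
  mul_nonneg_of_nonpos_of_nonpos (by omega) (by omega)

theorem eq_one_of_eulerChar_prod_surfaces_eq_zero {g h : ℕ} (hg : g ≠ 1)
    (hχ : ((2 : ℤ) - 2 * g) * ((2 : ℤ) - 2 * h) = 0) : h = 1 := by
  rcases mul_eq_zero.mp hχ with hg' | hh'
  · omega
  · omega

theorem lcf_zero_scalar_forces_flat_general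
    {M : Type*} [MeasurableSpace M] (μ : Measure M)
    (g h : ℕ) (hg : 2 ≤ g) (hh : 1 ≤ h)
    (χ : ℤ) (hχ : χ = ((2 : ℤ) - 2 * g) * ((2 : ℤ) - 2 * h))
    (s ric0sq Wpsq Wmsq : M → ℝ)
    (hric0 : ∀ x, 0 ≤ ric0sq x)
    (hCGB : (χ : ℝ) = (1 / (8 * π ^ 2)) *
      ∫ x, ((s x) ^ 2 / 24 - ric0sq x / 2 + Wpsq x + Wmsq x) ∂μ)
    (hLCF : (∀ x, Wpsq x = 0) ∧ ∀ x, Wmsq x = 0)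
    (hscalar : ∀ x, s x = 0) :
    χ ≤ 0 ∧ χ = 0 ∧ (∫ x, ric0sq x ∂μ) = 0 ∧ h = 1 := by
  have hχ_ric := eulerChar_eq_neg_integral_of_scalar_weyl_zero μ χ s ric0sq Wpsq Wmsq hCGB
    hLCF.1 hLCF.2 hscalar
  have hconst : 0 < 1 / (16 * π ^ 2) := by positivity
  have hI : 0 ≤ ∫ x, ric0sq x ∂μ := integral_nonneg hric0
  have hχ_nonpos : χ ≤ 0 := by
    have : (χ : ℝ) ≤ 0 := hχ_ric ▸ mul_nonpos_of_nonpos_of_nonneg (neg_nonpos.mpr hconst.le) hI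
    exact_mod_cast this
  have hχ_zero : χ = 0 :=
    le_antisymm hχ_nonpos (hχ ▸ eulerChar_prod_surfaces_nonneg (by omega) hh)
  have hI_zero : ∫ x, ric0sq x ∂μ = 0 := by
    rw [hχ_zero, Int.cast_zero, eq_comm, neg_mul, neg_eq_zero] at hχ_ric
    exact (mul_eq_zero.mp hχ_ric).resolve_left hconst.ne'
  exact ⟨hχ_nonpos, hχ_zero, hI_zero,
    eq_one_of_eulerChar_prod_surfaces_eq_zero (by omega) (hχ ▸ hχ_zero)⟩

/-- Chern–Gauss–Bonnet consequence: for a compact oriented Riemannian 4-manifold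
`M = Σ_g × Σ_h` (with `g ≥ 2`, `h ≥ 1`, so `χ = (2-2g)(2-2h) ≥ 0`), with
`χ = (1/8π²) ∫ (s²/24 − |Ric₀|²/2 + |W₊|² + |W₋|²)`, a locally conformally flat
metric (`W₊ = W₋ = 0`) of identically zero scalar curvature forces `χ ≤ 0`, hence
`χ = 0` and the metric is Ricci-flat (`∫|Ric₀|² = 0`), hence flat — which is
impossible when `g, h ≥ 2` since then `χ ≠ 0`; thus necessarily `h = 1`. -/
theorem lcf_zero_scalar_forces_flat
    {M : Type*} [MeasurableSpace M] (μ : Measure M) [IsFiniteMeasure μ]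
    (g h : ℕ) (hg : 2 ≤ g) (hh : 1 ≤ h)
    (χ : ℤ) (hχ : χ = ((2 : ℤ) - 2 * g) * ((2 : ℤ) - 2 * h))
    (s ric0sq Wpsq Wmsq : M → ℝ)
    (hric0 : ∀ x, 0 ≤ ric0sq x) (hric0int : Integrable ric0sq μ)
    (hWp : ∀ x, 0 ≤ Wpsq x) (hWm : ∀ x, 0 ≤ Wmsq x)
    (hCGB : (χ : ℝ) = (1 / (8 * π ^ 2)) *
      ∫ x, ((s x) ^ 2 / 24 - ric0sq x / 2 + Wpsq x + Wmsq x) ∂μ)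
    (hLCF : (∀ x, Wpsq x = 0) ∧ ∀ x, Wmsq x = 0)
    (hscalar : ∀ x, s x = 0) :
    χ ≤ 0 ∧ χ = 0 ∧ (∫ x, ric0sq x ∂μ) = 0 ∧ h = 1 :=
  lcf_zero_scalar_forces_flat_general μ g h hg hh χ hχ s ric0sq Wpsq Wmsq hric0 hCGB hLCF hscalar
end
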